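/- The number of closed quarter-plane walks of length 2n with step set S = {(0,1),(1,1),(-1,-1)} equals the number of Dyck-type one-dimensional walks: it equals the Catalan number Cat(n) = C(2n,n)/(n+1), the same as the number of closed quarter-plane walks of length 2n with step set {(0,1),(0,-1),(1,-1)}. -/

import Mathlib

open Finset

/-- Number of quarter-plane walks of length `m` from `(0,0)` to `e` with steps in `S`:
sequences of `m` steps, each in `S`, all partial sums having nonnegative coordinates,
with total sum `e`. -/
noncomputable def qpWalks (S : Set (ℤ × ℤ)) (m : ℕ) (e : ℤ × ℤ) : ℕ :=
  Nat.card {f : Fin m → ℤ × ℤ //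
    (∀ i, f i ∈ S) ∧
    (∀ k : ℕ,
      0 ≤ (∑ i ∈ Finset.univ.filter (fun i : Fin m => (i : ℕ) < k), f i).1 ∧
      0 ≤ (∑ i ∈ Finset.univ.filter (fun i : Fin m => (i : ℕ) < k), f i).2) ∧
    (∑ i, f i) = e}

/-!
In a closed walk, a linear form that is nonnegative on every step vanishes on every step used:
`y - x` rules out the step `(0,1)` of the first step set, and `x` rules out `(1,-1)` in the
second. What remains are walks with steps `±v`, for `v = (1,1)` resp. `v = (0,1)`. As `v > 0`,
such a walk is at `(#U - #D) • v` after each prefix, so it stays in the quarter plane exactly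
when every prefix has `#D ≤ #U`: the closed ones of length `2n` are the Dyck words of
semilength `n`.
-/

open DyckStep

theorem qpWalks_eq_qpWalks_sep_of_nonneg {S : Set (ℤ × ℤ)} {m : ℕ} {e : ℤ × ℤ} (φ : ℤ × ℤ →+ ℤ)
    (hS : ∀ s ∈ S, 0 ≤ φ s) (he : φ e = 0) :
    qpWalks S m e = qpWalks {s ∈ S | φ s = 0} m e := by
  refine Nat.card_congr (Equiv.subtypeEquivRight fun f => ?_)
  simp only [Set.mem_ofPred_eq, forall_and]
  refine ⟨fun ⟨hfS, hpos, hsum⟩ => ⟨⟨hfS, ?_⟩, hpos, hsum⟩, fun ⟨⟨hfS, _⟩, h⟩ => ⟨hfS, h⟩⟩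
  have hφ : ∑ i, φ (f i) = 0 := by rw [← map_sum, hsum, he]
  exact fun i => (sum_eq_zero_iff_of_nonneg fun i _ => hS _ (hfS i)).1 hφ i (mem_univ i)

theorem qpWalks_range_eq_card {α : Type*} {g : α → ℤ × ℤ} (hg : Function.Injective g) (m : ℕ)
    (e : ℤ × ℤ) :
    qpWalks (Set.range g) m e = Nat.card {w : Fin m → α //
      (∀ k : ℕ, 0 ≤ ∑ i : Fin m with i.val < k, g (w i)) ∧ ∑ i, g (w i) = e} := by
  symm
  refine Nat.card_congr (Equiv.ofBijective
    (fun w => ⟨g ∘ w.1, fun i => ⟨_, rfl⟩, fun k => Prod.le_def.1 (w.2.1 k), w.2.2⟩) ⟨?_, ?_⟩)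
  · intro w w' h
    ext i
    exact hg (congrFun (congrArg Subtype.val h) i)
  · rintro ⟨f, hS, hpos, hsum⟩
    obtain ⟨w, rfl⟩ : ∃ w : Fin m → α, g ∘ w = f :=
      ⟨fun i => (hS i).choose, funext fun i => (hS i).choose_spec⟩
    exact ⟨⟨w, fun k => Prod.le_def.2 (hpos k), hsum⟩, rfl⟩

namespace DyckStep

def toVec (v : ℤ × ℤ) : DyckStep → ℤ × ℤ
  | U => v
  | D => -v

theorem toVec_injective {v : ℤ × ℤ} (hv : v ≠ 0) : Function.Injective (toVec v) := by
  rintro (_ | _) (_ | _) h <;> simp_all [toVec, self_eq_neg, neg_eq_self]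

theorem range_toVec (v : ℤ × ℤ) : Set.range (toVec v) = {v, -v} := by
  ext x
  constructor
  · rintro ⟨_ | _, rfl⟩ <;> simp [toVec]
  · rintro (rfl | rfl)
    exacts [⟨U, rfl⟩, ⟨D, rfl⟩]

theorem sum_map_toVec (v : ℤ × ℤ) (l : List DyckStep) :
    (l.map (toVec v)).sum = ((l.count U : ℤ) - l.count D) • v := by
  induction l with
  | nil => simp
  | cons s l ih =>
    cases s <;>
      simp only [List.map_cons, List.sum_cons, ih, toVec, List.count_cons_self,
        List.count_cons_of_ne (by decide : U ≠ D), List.count_cons_of_ne (by decide : D ≠ U)] <;>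
      push_cast <;> module

theorem sum_toVec_filter_lt {m : ℕ} (v : ℤ × ℤ) (w : Fin m → DyckStep) (k : ℕ) :
    ∑ i : Fin m with i.val < k, toVec v (w i) =
      ((((List.ofFn w).take k).count U : ℤ) - ((List.ofFn w).take k).count D) • v := by
  rw [← sum_map_toVec, List.map_take, List.map_ofFn, List.sum_take_ofFn]
  rfl

theorem sum_toVec {m : ℕ} (v : ℤ × ℤ) (w : Fin m → DyckStep) :
    ∑ i, toVec v (w i) = (((List.ofFn w).count U : ℤ) - (List.ofFn w).count D) • v := by
  rw [← sum_map_toVec, List.map_ofFn, List.sum_ofFn]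
  rfl

end DyckStep

def DyckWord.equivFunOfLength (m : ℕ) : {p : DyckWord // p.toList.length = m} ≃
    {w : Fin m → DyckStep // (∀ k, ((List.ofFn w).take k).count D ≤ ((List.ofFn w).take k).count U)
      ∧ (List.ofFn w).count U = (List.ofFn w).count D} where
  toFun p := by
    have hl : List.ofFn (fun i : Fin m => p.1.toList[i]) = p.1.toList :=
      List.ext_getElem (by simp [p.2]) fun _ _ _ => by simp
    refine ⟨fun i => p.1.toList[i], ?_⟩
    rw [hl]
    exact ⟨p.1.count_D_le_count_U, p.1.count_U_eq_count_D⟩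
  invFun w := ⟨⟨List.ofFn w.1, w.2.2, w.2.1⟩, List.length_ofFn⟩
  left_inv p :=
    Subtype.ext <| DyckWord.ext <| List.ext_getElem (by simp [p.2]) fun _ _ _ => by simp
  right_inv w := Subtype.ext <| funext fun i => by simp

theorem DyckWord.card_length_eq_catalan (n : ℕ) :
    Nat.card {p : DyckWord // p.toList.length = 2 * n} = catalan n := by
  rw [← DyckWord.card_dyckWord_semilength_eq_catalan, ← Nat.card_eq_fintype_card]
  exact Nat.card_congr <| Equiv.subtypeEquivRight fun p => by
    rw [← p.two_mul_semilength_eq_length]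
    omega

theorem qpWalks_pair_neg_eq_catalan {v : ℤ × ℤ} (hv : 0 < v) (n : ℕ) :
    qpWalks {v, -v} (2 * n) 0 = catalan n := by
  rw [← range_toVec, qpWalks_range_eq_card (toVec_injective hv.ne'),
    ← DyckWord.card_length_eq_catalan, Nat.card_congr (DyckWord.equivFunOfLength _)]
  refine Nat.card_congr (Equiv.subtypeEquivRight fun w => ?_)
  simp only [sum_toVec_filter_lt, sum_toVec, smul_nonneg_iff_nonneg_of_pos_right hv, smul_eq_zero,
    hv.ne', or_false, sub_nonneg, sub_eq_zero, Nat.cast_le, Nat.cast_inj]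

theorem closed_walks_catalan (n : ℕ) :
    qpWalks {(0,1), (1,1), (-1,-1)} (2 * n) (0, 0) = catalan n ∧
    qpWalks {(0,1), (0,-1), (1,-1)} (2 * n) (0, 0) = catalan n := by
  have diagonal : {s ∈ ({(0,1), (1,1), (-1,-1)} : Set (ℤ × ℤ)) |
      (AddMonoidHom.snd ℤ ℤ - AddMonoidHom.fst ℤ ℤ) s = 0} = {(1,1), -(1,1)} := by
    ext ⟨x, y⟩
    simp only [Set.mem_insert_iff, Set.mem_singleton_iff, Set.mem_ofPred_eq, Prod.mk.injEq,
      AddMonoidHom.sub_apply, AddMonoidHom.coe_snd, AddMonoidHom.coe_fst, Prod.neg_mk]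
    omega
  have vertical : {s ∈ ({(0,1), (0,-1), (1,-1)} : Set (ℤ × ℤ)) |
      AddMonoidHom.fst ℤ ℤ s = 0} = {(0,1), -(0,1)} := by
    ext ⟨x, y⟩
    simp only [Set.mem_insert_iff, Set.mem_singleton_iff, Set.mem_ofPred_eq, Prod.mk.injEq,
      AddMonoidHom.coe_fst, Prod.neg_mk]
    omega
  constructor
  · rw [qpWalks_eq_qpWalks_sep_of_nonneg (AddMonoidHom.snd ℤ ℤ - AddMonoidHom.fst ℤ ℤ)
      (by simp) (by simp), diagonal]
    exact qpWalks_pair_neg_eq_catalan (by simp [Prod.lt_iff]) n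
  · rw [qpWalks_eq_qpWalks_sep_of_nonneg (AddMonoidHom.fst ℤ ℤ) (by simp) (by simp), vertical]
    exact qpWalks_pair_neg_eq_catalan (by simp [Prod.lt_iff]) n
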